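/- For every subset S ⊆ {1,…,N} of size at least 2 and every v ∈ S, the quantity Δ₁(S,v) = ξ₁(S) − ξ₁(S∖{v}) belongs to {0, −1}; in particular Δ₁(S,v) ≤ 0. -/

import Mathlib

/-!
With `P = A⁺A` for the measurements `A = M_S U`, the residual is `U - U P = U (1 - P)`; as `U` is
an isometry and `1 - P` an orthogonal projection, `ξ₁(S) = tr (1 - P) = k - rank (M_S U)`.
The rows of `M_S U` are the rows of `U` indexed by `S`, and removing one row lowers the rank by
`0` or `1`, so `Δ₁(S, v) ∈ {0, -1}`.
-/

open Matrix

noncomputable section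

open scoped Classical in
/-- The Moore–Penrose pseudoinverse of a real matrix, characterised by the four
Penrose conditions:  `A A† A = A`, `A† A A† = A†`, `(A A†)ᵀ = A A†`, `(A† A)ᵀ = A† A`. -/
noncomputable def pinv {m n : Type*} [Fintype m] [Fintype n] [DecidableEq m] [DecidableEq n]
    (A : Matrix m n ℝ) : Matrix n m ℝ :=
  if h : ∃ B : Matrix n m ℝ,
      A * B * A = A ∧ B * A * B = B ∧ (A * B)ᵀ = A * B ∧ (B * A)ᵀ = B * A
  then h.choose else 0

/-- The sampling matrix `M_S` of a subset `S ⊆ {1,…,N}`: rows are indexed by the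
elements of `S`, and the row corresponding to `j ∈ S` is the standard basis row vector `eⱼᵀ`. -/
def samp {N : ℕ} (S : Finset (Fin N)) : Matrix {x // x ∈ S} (Fin N) ℝ :=
  fun i j => if (i : Fin N) = j then 1 else 0

/-- Squared Frobenius norm of a matrix. -/
def frobSq {m n : Type*} [Fintype m] [Fintype n] (A : Matrix m n ℝ) : ℝ :=
  ∑ i, ∑ j, (A i j) ^ 2

/-- The least-squares reconstruction matrix `R_S = U (M_S U)†`. -/
def lsRec {N k : ℕ} (U : Matrix (Fin N) (Fin k) ℝ) (S : Finset (Fin N)) :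
    Matrix (Fin N) {x // x ∈ S} ℝ :=
  U * pinv (samp S * U)

/-- `ξ₁(S) = ‖U − R_S M_S U‖_F²`, the noiseless reconstruction error. -/
def xi1 {N k : ℕ} (U : Matrix (Fin N) (Fin k) ℝ) (S : Finset (Fin N)) : ℝ :=
  frobSq (U - lsRec U S * (samp S * U))

/-- `ξ₂(S) = ‖R_S‖_F²`, the noise-sensitivity term. -/
def xi2 {N k : ℕ} (U : Matrix (Fin N) (Fin k) ℝ) (S : Finset (Fin N)) : ℝ :=
  frobSq (lsRec U S)

namespace Matrix

lemma trace_eq_rank_of_isIdempotentElem {n K : Type*} [Fintype n] [DecidableEq n] [Field K]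
    {P : Matrix n n K} (hP : IsIdempotentElem P) : P.trace = P.rank := by
  have hP' : IsIdempotentElem (toLin' P) := hP.map toLinAlgEquiv'
  rw [← trace_toLin'_eq, (LinearMap.IsIdempotentElem.isProj_range _ hP').trace, rank]
  rfl

lemma mul_eq_mul_of_transpose_mul_self_mul_eq {m n p : Type*} [Fintype m] [Fintype n]
    {A : Matrix m n ℝ} {X Y : Matrix n p ℝ} (h : Aᵀ * A * X = Aᵀ * A * Y) : A * X = A * Y := by
  have hzero : (A * (X - Y))ᴴ * (A * (X - Y)) = 0 := by
    rw [conjTranspose_eq_transpose_of_trivial, transpose_mul, Matrix.mul_assoc,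
      ← Matrix.mul_assoc Aᵀ, Matrix.mul_sub, h, sub_self, Matrix.mul_zero]
  rw [← sub_eq_zero, ← Matrix.mul_sub]
  exact conjTranspose_mul_self_eq_zero.mp hzero

/-- `C = G⁺` is obtained by inverting the nonzero eigenvalues of `G`, i.e. as `cfc (·⁻¹) G`. -/
lemma exists_penrose_of_transpose_eq {n : Type*} [Fintype n] [DecidableEq n]
    (G : Matrix n n ℝ) (hG : Gᵀ = G) :
    ∃ C : Matrix n n ℝ, G * C * G = G ∧ C * G * C = C ∧ Cᵀ = C ∧ G * C = C * G := by
  have hsa : IsSelfAdjoint G := by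
    rw [IsSelfAdjoint, star_eq_conjTranspose, conjTranspose_eq_transpose_of_trivial, hG]
  have hmul (f g : ℝ → ℝ) : cfc f G * cfc g G = cfc (fun x => f x * g x) G :=
    (cfc_mul f g G ((finite_spectrum G).continuousOn f) ((finite_spectrum G).continuousOn g)).symm
  have hid : cfc (fun x : ℝ => x) G = G := cfc_id' ℝ G
  set C := cfc (fun x : ℝ => x⁻¹) G
  refine ⟨C, ?_, ?_, ?_, ?_⟩
  · calc G * C * G = cfc (fun x : ℝ => x) G * C * cfc (fun x : ℝ => x) G := by rw [hid]
      _ = G := by rw [hmul, hmul]; simp only [mul_inv_mul_cancel, hid]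
  · calc C * G * C = C * cfc (fun x : ℝ => x) G * C := by rw [hid]
      _ = C := by rw [hmul, hmul]; congr 1; funext x; simpa using mul_inv_mul_cancel x⁻¹
  · have hC : IsSelfAdjoint C := IsSelfAdjoint.cfc
    rwa [IsSelfAdjoint, star_eq_conjTranspose, conjTranspose_eq_transpose_of_trivial] at hC
  · calc G * C = cfc (fun x : ℝ => x) G * C := by rw [hid]
      _ = C * cfc (fun x : ℝ => x) G := by rw [hmul, hmul]; simp_rw [mul_comm]
      _ = C * G := by rw [hid]

/-- `A⁺ = (AᵀA)⁺ Aᵀ`. -/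
lemma exists_penrose {m n : Type*} [Fintype m] [Fintype n] [DecidableEq n] (A : Matrix m n ℝ) :
    ∃ B : Matrix n m ℝ,
      A * B * A = A ∧ B * A * B = B ∧ (A * B)ᵀ = A * B ∧ (B * A)ᵀ = B * A := by
  obtain ⟨C, hGCG, hCGC, hC, hGC⟩ :=
    exists_penrose_of_transpose_eq (Aᵀ * A) (by rw [transpose_mul, transpose_transpose])
  have hACG : A * (C * (Aᵀ * A)) = A := by
    have := mul_eq_mul_of_transpose_mul_self_mul_eq (A := A) (X := C * (Aᵀ * A)) (Y := 1)
      (by rw [Matrix.mul_one, ← Matrix.mul_assoc, hGCG])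
    rwa [Matrix.mul_one] at this
  refine ⟨C * Aᵀ, ?_, ?_, ?_, ?_⟩
  · rw [← hACG]; simp only [Matrix.mul_assoc, hACG]
  · calc C * Aᵀ * A * (C * Aᵀ) = C * (Aᵀ * A) * C * Aᵀ := by simp only [Matrix.mul_assoc]
      _ = C * Aᵀ := by rw [hCGC]
  · simp only [transpose_mul, transpose_transpose, hC, Matrix.mul_assoc]
  · rw [Matrix.mul_assoc, transpose_mul, hC, transpose_mul, transpose_transpose, hGC]

end Matrix

open Matrix

lemma pinv_spec {m n : Type*} [Fintype m] [Fintype n] [DecidableEq m] [DecidableEq n]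
    (A : Matrix m n ℝ) :
    A * pinv A * A = A ∧ pinv A * A * pinv A = pinv A ∧ (A * pinv A)ᵀ = A * pinv A ∧
      (pinv A * A)ᵀ = pinv A * A := by
  have h := exists_penrose A
  rw [pinv, dif_pos h]
  exact h.choose_spec

lemma isIdempotentElem_pinv_mul_self {m n : Type*} [Fintype m] [Fintype n] [DecidableEq m]
    [DecidableEq n] (A : Matrix m n ℝ) : IsIdempotentElem (pinv A * A) := by
  rw [IsIdempotentElem, ← Matrix.mul_assoc, (pinv_spec A).2.1]

lemma rank_pinv_mul_self {m n : Type*} [Fintype m] [Fintype n] [DecidableEq m] [DecidableEq n]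
    (A : Matrix m n ℝ) : (pinv A * A).rank = A.rank := by
  refine le_antisymm (rank_mul_le_right _ _) ?_
  calc A.rank = (A * (pinv A * A)).rank := by rw [← Matrix.mul_assoc, (pinv_spec A).1]
    _ ≤ (pinv A * A).rank := rank_mul_le_right _ _

lemma frobSq_eq_trace {m n : Type*} [Fintype m] [Fintype n] (M : Matrix m n ℝ) :
    frobSq M = (Mᵀ * M).trace := by
  simp only [frobSq, trace, diag_apply, mul_apply, transpose_apply, sq]
  exact Finset.sum_comm

lemma frobSq_sub_mul_pinv_mul {m k p : Type*} [Fintype m] [Fintype k] [Fintype p]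
    [DecidableEq k] [DecidableEq p] (U : Matrix m k ℝ) (hU : Uᵀ * U = 1) (A : Matrix p k ℝ) :
    frobSq (U - U * pinv A * A) = Fintype.card k - A.rank := by
  set P := pinv A * A
  have hQ : IsIdempotentElem (1 - P) := (isIdempotentElem_pinv_mul_self A).one_sub
  have hgram : (U * (1 - P))ᵀ * (U * (1 - P)) = 1 - P := by
    calc (U * (1 - P))ᵀ * (U * (1 - P)) = (1 - P)ᵀ * (Uᵀ * U) * (1 - P) := by
          simp only [transpose_mul, Matrix.mul_assoc]
      _ = 1 - P := by rw [hU, Matrix.mul_one, transpose_sub, transpose_one, (pinv_spec A).2.2.2,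
          hQ.eq]
  have hres : U - U * pinv A * A = U * (1 - P) := by
    rw [Matrix.mul_sub, Matrix.mul_one, Matrix.mul_assoc]
  rw [hres, frobSq_eq_trace, hgram, trace_sub, trace_one,
    trace_eq_rank_of_isIdempotentElem (isIdempotentElem_pinv_mul_self A), rank_pinv_mul_self]

lemma samp_mul {N : ℕ} {n : Type*} [Fintype n] (S : Finset (Fin N)) (A : Matrix (Fin N) n ℝ) :
    samp S * A = A.submatrix (↑) id := by
  ext i j
  simp [samp, mul_apply]

lemma xi1_eq_sub_rank {N k : ℕ} (U : Matrix (Fin N) (Fin k) ℝ) (hU : Uᵀ * U = 1)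
    (S : Finset (Fin N)) : xi1 U S = k - (U.submatrix ((↑) : S → Fin N) id).rank := by
  rw [xi1, lsRec, frobSq_sub_mul_pinv_mul U hU, Fintype.card_fin, samp_mul]

lemma Submodule.finrank_span_insert_le {K V : Type*} [DivisionRing K] [AddCommGroup V]
    [Module K V] [FiniteDimensional K V] (x : V) (s : Set V) :
    Module.finrank K (Submodule.span K (insert x s)) ≤
      Module.finrank K (Submodule.span K s) + 1 := by
  rw [Submodule.span_insert]
  refine (Submodule.finrank_add_le_finrank_add_finrank _ _).trans ?_
  have := finrank_span_le_card (R := K) ({x} : Set V)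
  simp only [Set.toFinset_singleton, Finset.card_singleton] at this
  omega

namespace Matrix

variable {m n K : Type*} [Fintype n] [DecidableEq m] [Field K]

lemma rank_submatrix_erase_le (A : Matrix m n K) (s : Finset m) (v : m) :
    (A.submatrix ((↑) : s.erase v → m) id).rank ≤ (A.submatrix ((↑) : s → m) id).rank :=
  rank_submatrix_le (A.submatrix ((↑) : s → m) id)
    (fun i : s.erase v => (⟨i, Finset.mem_of_mem_erase i.2⟩ : s)) id

lemma rank_submatrix_le_rank_submatrix_erase_add_one (A : Matrix m n K) (s : Finset m) (v : m) :
    (A.submatrix ((↑) : s → m) id).rank ≤ (A.submatrix ((↑) : s.erase v → m) id).rank + 1 := by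
  have hrows (t : Finset m) : Set.range (A.submatrix ((↑) : t → m) id).row = A.row '' t :=
    (Set.range_comp A.row ((↑) : t → m)).trans (by rw [Subtype.range_coe])
  rw [rank_eq_finrank_span_row, rank_eq_finrank_span_row, hrows, hrows, Finset.coe_erase]
  calc _ ≤ Module.finrank K (Submodule.span K (A.row '' insert v ((s : Set m) \ {v}))) :=
        Submodule.finrank_mono (Submodule.span_mono
          (Set.image_mono (Set.subset_insert_sdiff_singleton v s)))
    _ ≤ _ := by rw [Set.image_insert_eq]; exact Submodule.finrank_span_insert_le _ _

end Matrix

theorem stmt6_general (N k : ℕ) (U : Matrix (Fin N) (Fin k) ℝ) (hU : Uᵀ * U = 1)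
    (S : Finset (Fin N)) (v : Fin N) :
    (xi1 U S - xi1 U (S.erase v) = 0 ∨ xi1 U S - xi1 U (S.erase v) = -1) ∧
      xi1 U S - xi1 U (S.erase v) ≤ 0 := by
  rw [xi1_eq_sub_rank U hU, xi1_eq_sub_rank U hU]
  have hle := rank_submatrix_erase_le U S v
  have hge := rank_submatrix_le_rank_submatrix_erase_add_one U S v
  set r := (U.submatrix ((↑) : S → Fin N) id).rank
  set r' := (U.submatrix ((↑) : S.erase v → Fin N) id).rank
  obtain h | h : r = r' ∨ r = r' + 1 := by omega
  · simp [h]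
  · rw [h]; push_cast
    exact ⟨Or.inr (by ring), by linarith⟩

/-- for `|S| ≥ 2` and `v ∈ S`, `Δ₁(S,v) = ξ₁(S) − ξ₁(S∖{v})` belongs to
`{0, −1}`; in particular `Δ₁(S,v) ≤ 0`. -/
theorem stmt6 (N k : ℕ) (hN : 0 < N) (hk : 0 < k) (hkN : k ≤ N)
    (U : Matrix (Fin N) (Fin k) ℝ) (hU : Uᵀ * U = 1)
    (S : Finset (Fin N)) (hS : 2 ≤ S.card) (v : Fin N) (hv : v ∈ S) :
    (xi1 U S - xi1 U (S.erase v) = 0 ∨ xi1 U S - xi1 U (S.erase v) = -1) ∧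
      xi1 U S - xi1 U (S.erase v) ≤ 0 :=
  stmt6_general N k U hU S v
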